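/- arXiv:1109.0715 — 2 statements merged into one kernel-verified Lean document; each statement's English description precedes it below -/
import Mathlib

section
/- The shuffle algebra S = ℂ⟨ξ_0,ξ_1⟩ decomposes as a polynomial algebra S = S^0[ξ_0] over the subalgebra S^0 = ℂ∅ ⊕ Sξ_1 of words ending in ξ_1; that is, every element of S can be written uniquely as a finite sum Σ_j w_j ⧢ ξ_0^{⧢j} with w_j ∈ S^0. -/
noncomputable section
open scoped BigOperators

/-- The shuffle product of two words (letters: `false` = ξ_0, `true` = ξ_1),
as a formal ℂ-linear combination of words. -/
def sh : List Bool → List Bool → (List Bool →₀ ℂ)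
  | [], w => Finsupp.single w 1
  | a :: w1, [] => Finsupp.single (a :: w1) 1
  | a :: w1, b :: w2 =>
      (sh w1 (b :: w2)).mapDomain (a :: ·) + (sh (a :: w1) w2).mapDomain (b :: ·)
  termination_by w1 w2 => w1.length + w2.length

/-- The bilinear extension of the shuffle product to S = ℂ⟨ξ_0,ξ_1⟩. -/
def shProd (f g : List Bool →₀ ℂ) : List Bool →₀ ℂ :=
  f.sum fun u cu => g.sum fun v cv => (cu * cv) • sh u v

/-- Iterated shuffle powers. -/
def shPow (f : List Bool →₀ ℂ) : ℕ → (List Bool →₀ ℂ)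
  | 0 => Finsupp.single [] 1
  | n + 1 => shProd f (shPow f n)

/-- The set of words spanning S^0: the empty word and the words ending with ξ_1. -/
def S0words : Set (List Bool) := {l | l = [] ∨ l.getLast? = some true}

/-- The set of words spanning S^{10}: the empty word and the words beginning
with ξ_0 and ending with ξ_1. -/
def S10words : Set (List Bool) :=
  {l | l = [] ∨ (l.head? = some false ∧ l.getLast? = some true)}

/-- The subspace S^0 = ℂ∅ ⊕ Sξ_1 of the shuffle algebra. -/
def S0 : Submodule ℂ (List Bool →₀ ℂ) := Finsupp.supported ℂ ℂ S0words

/-- The subspace S^{10} = ℂ∅ ⊕ ξ_0Sξ_1 of the shuffle algebra. -/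
def S10 : Submodule ℂ (List Bool →₀ ℂ) := Finsupp.supported ℂ ℂ S10words

/-!
Every word factors uniquely as `w ++ ξ_0^k` with `w` in `S0words`. For such `w` the coefficient of
`x ++ ξ_0^k` in the shuffle `w ⧢ ξ_0^k` is `δ_{x,w}`, because the last letter of `w` (if any) is
`ξ_1` and so no letter of `w` can land among the final `k` positions. Since
`w ⧢ ξ_0^{⧢k} = k! · (w ⧢ ξ_0^k)`, the products `w ⧢ ξ_0^{⧢k}` are unitriangular with respect to
the number of trailing `ξ_0`'s: this gives existence by induction on that number, and uniqueness by
reading off the top coefficient `c_N` at the words `x ++ ξ_0^N`.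
-/
open Finsupp List
open scoped Nat

lemma sh_nil_right (u : List Bool) : sh u [] = single u 1 := by
  cases u <;> simp [sh]

lemma length_eq_of_mem_support_sh {u v l : List Bool} (hl : l ∈ (sh u v).support) :
    l.length = u.length + v.length := by
  induction u, v using sh.induct generalizing l with
  | case1 w => simp_all [sh]
  | case2 a w => simp_all [sh]
  | case3 a u b v ihu ihv =>
    rw [sh] at hl
    rcases Finset.mem_union.1 (support_add hl) with h | h <;>
      obtain ⟨l', hl', rfl⟩ := Finset.mem_image.1 (mapDomain_support h)
    · simp only [length_cons, ihu hl']; omega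
    · simp only [length_cons, ihv hl']; omega

lemma mapDomain_cons_apply_cons (a b : Bool) (f : List Bool →₀ ℂ) (l : List Bool) :
    f.mapDomain (a :: ·) (b :: l) = if b = a then f l else 0 := by
  split_ifs with hb
  · exact hb ▸ mapDomain_apply List.cons_injective f l
  · exact mapDomain_of_notMem_range _ _ fun ⟨x, hx⟩ => hb (List.cons_eq_cons.1 hx).1.symm

lemma mem_S0words_of_cons {a : Bool} {w : List Bool} (h : a :: w ∈ S0words) : w ∈ S0words := by
  cases w with
  | nil => exact Or.inl rfl
  | cons b w => simpa [S0words] using h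

lemma append_replicate_false_notMem_S0words (x : List Bool) {n : ℕ} (hn : n ≠ 0) :
    x ++ replicate n false ∉ S0words := by
  simp [S0words, List.getLast?_append, List.getLast?_replicate, hn]

lemma sh_replicate_false_apply_append {w : List Bool} (hw : w ∈ S0words) (k : ℕ)
    (x : List Bool) : sh w (replicate k false) (x ++ replicate k false) = single w 1 x := by
  induction w generalizing k x with
  | nil => simp [sh, single_apply, eq_comm]
  | cons a w ihw =>
    induction k generalizing x with
    | zero => simp [sh_nil_right]
    | succ k ihk =>
      rw [replicate_succ, sh]
      cases x with
      | nil =>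
        have hlen : sh w (false :: replicate k false) (replicate k false) = 0 :=
          notMem_support_iff.1 fun h => by
            have := length_eq_of_mem_support_sh h
            simp only [length_replicate, length_cons] at this
            omega
        simpa [mapDomain_cons_apply_cons, hlen] using ihk []
      | cons b x =>
        have h₁ := ihw (mem_S0words_of_cons hw) (k + 1) x
        have h₂ := ihk (x ++ [false])
        have hne : x ++ [false] ≠ a :: w := fun h =>
          append_replicate_false_notMem_S0words x (n := 1) one_ne_zero (h.symm ▸ hw)
        rw [replicate_succ] at h₁
        rw [append_assoc, singleton_append, single_eq_of_ne hne] at h₂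
        simp only [cons_append, Finsupp.add_apply, mapDomain_cons_apply_cons, h₁, h₂]
        by_cases hb : b = a <;> simp [hb, single_apply]

lemma shProd_eq_linearCombination (f g : List Bool →₀ ℂ) :
    shProd f g = linearCombination ℂ (fun u => linearCombination ℂ (sh u) g) f := by
  simp [shProd, linearCombination_apply, Finsupp.smul_sum, smul_smul]

lemma sh_singleton_false_replicate (n : ℕ) :
    sh [false] (replicate n false) = ((n + 1 : ℕ) : ℂ) • single (replicate (n + 1) false) 1 := by
  induction n with
  | zero => simp [sh_nil_right]
  | succ n ih =>
    rw [replicate_succ, sh, ih, sh, mapDomain_single, mapDomain_smul, mapDomain_single,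
      ← replicate_succ, ← replicate_succ]
    push_cast
    module

lemma shPow_single_false (j : ℕ) :
    shPow (single [false] 1) j = (j ! : ℂ) • single (replicate j false) 1 := by
  induction j with
  | zero => simp [shPow]
  | succ j ih =>
    rw [shPow, ih, shProd_eq_linearCombination, linearCombination_single, one_smul, map_smul,
      linearCombination_single, one_smul, sh_singleton_false_replicate, smul_smul,
      Nat.factorial_succ, Nat.cast_mul, mul_comm]

def shuffleZeros (j : ℕ) : (List Bool →₀ ℂ) →ₗ[ℂ] (List Bool →₀ ℂ) :=
  linearCombination ℂ fun u => sh u (replicate j false)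

lemma shProd_shPow_single_false (w : List Bool →₀ ℂ) (j : ℕ) :
    shProd w (shPow (single [false] 1) j) = (j ! : ℂ) • shuffleZeros j w := by
  simp_rw [shPow_single_false, shProd_eq_linearCombination, map_smul, linearCombination_single,
    one_smul, shuffleZeros, linearCombination_apply, Finsupp.smul_sum, smul_comm (j ! : ℂ)]

lemma shuffleZeros_apply_append {w : List Bool →₀ ℂ} (hw : w ∈ S0) (j : ℕ) (x : List Bool) :
    shuffleZeros j w (x ++ replicate j false) = w x := by
  have hsupp := (mem_supported ℂ w).1 hw
  calc shuffleZeros j w (x ++ replicate j false)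
      = w.sum fun u c => single u c x := by
        rw [shuffleZeros, linearCombination_apply, Finsupp.sum_apply]
        refine Finsupp.sum_congr fun u hu => ?_
        rw [Finsupp.smul_apply, sh_replicate_false_apply_append (hsupp hu), ← Finsupp.smul_apply,
          smul_single_one]
    _ = w x := by rw [← Finsupp.sum_apply, sum_single]

lemma shuffleZeros_apply_append_of_lt {w : List Bool →₀ ℂ} (hw : w ∈ S0) {j N : ℕ} (h : j < N)
    (x : List Bool) : shuffleZeros j w (x ++ replicate N false) = 0 := by
  rw [← Nat.sub_add_cancel h.le, replicate_add, ← append_assoc, shuffleZeros_apply_append hw]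
  exact notMem_support_iff.1 fun hx =>
    append_replicate_false_notMem_S0words x (Nat.sub_ne_zero_of_lt h) ((mem_supported ℂ w).1 hw hx)

def shuffleDecomp : (ℕ →₀ (List Bool →₀ ℂ)) →ₗ[ℂ] (List Bool →₀ ℂ) :=
  Finsupp.lsum ℂ fun j => (j ! : ℂ) • shuffleZeros j

lemma shuffleDecomp_apply (c : ℕ →₀ (List Bool →₀ ℂ)) :
    shuffleDecomp c = c.sum fun j w => shProd w (shPow (single [false] 1) j) := by
  simp only [shuffleDecomp, lsum_apply, shProd_shPow_single_false]
  rfl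

lemma shuffleDecomp_apply_append_replicate {c : ℕ →₀ (List Bool →₀ ℂ)} (hc : ∀ j, c j ∈ S0)
    {N : ℕ} (hN : ∀ j, N < j → c j = 0) (x : List Bool) :
    shuffleDecomp c (x ++ replicate N false) = N ! * c N x := by
  rw [shuffleDecomp, lsum_apply, Finsupp.sum_apply, Finsupp.sum, Finset.sum_eq_single N]
  · simp [shuffleZeros_apply_append (hc N)]
  · intro j hj hjN
    have hjN : j < N := lt_of_le_of_ne (not_lt.1 fun h => mem_support_iff.1 hj (hN j h)) hjN
    simp [shuffleZeros_apply_append_of_lt (hc j) hjN]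
  · intro hN
    simp [notMem_support_iff.1 hN]

lemma eq_zero_of_shuffleDecomp_eq_zero {c : ℕ →₀ (List Bool →₀ ℂ)} (hc : ∀ j, c j ∈ S0)
    (h : shuffleDecomp c = 0) : c = 0 := by
  by_contra hne
  have hsupp := support_nonempty_iff.2 hne
  have hN : ∀ j, c.support.max' hsupp < j → c j = 0 := fun j hj =>
    notMem_support_iff.1 fun h => (c.support.le_max' j h).not_gt hj
  apply mem_support_iff.1 (c.support.max'_mem hsupp)
  ext x
  simpa [h, Nat.factorial_ne_zero] using (shuffleDecomp_apply_append_replicate hc hN x).symm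

def S0coeffs : Submodule ℂ (ℕ →₀ (List Bool →₀ ℂ)) := ⨅ j, S0.comap (lapply j)

@[simp]
lemma mem_S0coeffs {c : ℕ →₀ (List Bool →₀ ℂ)} : c ∈ S0coeffs ↔ ∀ j, c j ∈ S0 := by
  simp [S0coeffs]

lemma shuffleZeros_mem_map_S0coeffs {w : List Bool →₀ ℂ} (hw : w ∈ S0) (j : ℕ) :
    shuffleZeros j w ∈ S0coeffs.map shuffleDecomp := by
  refine ⟨single j ((j ! : ℂ)⁻¹ • w), mem_S0coeffs.2 fun i => ?_, ?_⟩
  · rw [single_apply]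
    split_ifs
    · exact S0.smul_mem _ hw
    · exact S0.zero_mem
  · simp [shuffleDecomp, smul_smul, Nat.factorial_ne_zero]

lemma exists_mem_S0words_append_replicate (l : List Bool) :
    ∃ w ∈ S0words, ∃ k, l = w ++ replicate k false := by
  induction l using List.reverseRecOn with
  | nil => exact ⟨[], Or.inl rfl, 0, rfl⟩
  | append_singleton l b ih =>
    cases b with
    | false =>
      obtain ⟨w, hw, k, rfl⟩ := ih
      exact ⟨w, hw, k + 1, by simp [replicate_succ']⟩
    | true => exact ⟨l ++ [true], Or.inr (by simp), 0, by simp⟩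

lemma single_append_replicate_mem_map_S0coeffs (k : ℕ) {w : List Bool} (hw : w ∈ S0words) :
    single (w ++ replicate k false) 1 ∈ S0coeffs.map shuffleDecomp := by
  induction k using Nat.strong_induction_on generalizing w with
  | _ k ih =>
    set r := shuffleZeros k (single w 1) - single (w ++ replicate k false) 1
    have hr : ∀ x, r (x ++ replicate k false) = 0 := fun x => by
      simp [r, shuffleZeros_apply_append (single_mem_supported ℂ 1 hw), single_apply]
    have hrM : r ∈ S0coeffs.map shuffleDecomp := by
      rw [← Finsupp.sum_single r]
      refine Submodule.finsuppSum_mem _ _ _ _ fun y hy => ?_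
      obtain ⟨w', hw', k', rfl⟩ := exists_mem_S0words_append_replicate y
      have hk' : k' < k := by
        by_contra! hle
        apply hy
        rw [← Nat.sub_add_cancel hle, replicate_add, ← append_assoc]
        exact hr _
      rw [← smul_single_one]
      exact Submodule.smul_mem _ _ (ih k' hk' hw')
    simpa [r] using sub_mem (shuffleZeros_mem_map_S0coeffs (single_mem_supported ℂ 1 hw) k) hrM

lemma map_shuffleDecomp_S0coeffs : S0coeffs.map shuffleDecomp = ⊤ := by
  refine Submodule.eq_top_iff'.2 fun u => ?_
  induction u using Finsupp.induction_linear with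
  | zero => exact zero_mem _
  | add f g hf hg => exact add_mem hf hg
  | single l c =>
    obtain ⟨w, hw, k, rfl⟩ := exists_mem_S0words_append_replicate l
    rw [← smul_single_one]
    exact Submodule.smul_mem _ _ (single_append_replicate_mem_map_S0coeffs k hw)

/-- S = S^0[ξ_0] — every element u of the shuffle algebra S
is uniquely a finite sum u = Σ_j w_j ⧢ ξ_0^{⧢j} with w_j ∈ S^0. -/
theorem shuffle_decomposition_S0 (u : List Bool →₀ ℂ) :
    ∃! c : ℕ →₀ (List Bool →₀ ℂ),
      (∀ j, c j ∈ S0) ∧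
      u = c.sum fun j w => shProd w (shPow (Finsupp.single [false] 1) j) := by
  have hu : u ∈ S0coeffs.map shuffleDecomp := map_shuffleDecomp_S0coeffs ▸ Submodule.mem_top
  obtain ⟨c, hc, rfl⟩ := Submodule.mem_map.1 hu
  rw [mem_S0coeffs] at hc
  refine ⟨c, ⟨hc, shuffleDecomp_apply c⟩, fun d ⟨hd, hcd⟩ => ?_⟩
  rw [← shuffleDecomp_apply] at hcd
  refine sub_eq_zero.1 (eq_zero_of_shuffleDecomp_eq_zero (fun j => sub_mem (hd j) (hc j)) ?_)
  rw [map_sub, hcd, sub_self]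
end
end

section
/- Landen's formula for the dilogarithm: for real 0 < z < 1 (or z in a suitable domain), Li_2(−z/(1−z)) = −Li_2(z) − (1/2)log²(1−z). -/
noncomputable section

/-- The dilogarithm Li_2(x) = Σ_{n≥1} x^n/n², extended analytically to x < 1 via the
standard integral representation Li_2(x) = −∫_0^x log(1−t)/t dt. -/
def Li2 (x : ℝ) : ℝ := -∫ t in (0:ℝ)..x, Real.log (1 - t) / t

/-!
Both sides of Landen's formula are differentiable on `(-∞, 1)` and agree at `z = 0`, so it
suffices to compare derivatives. On `(-∞, 1)` we have `Li₂' = -K`, where `K = dilogKernel` is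
`log (1 - t) / t` with its removable singularity `K 0 = -1` filled in. The Möbius map
`u z = -z / (1 - z)` satisfies `1 - u z = (1 - z)⁻¹` and `u' z = -(1 - z)⁻²`, so the chain rule
reduces the claim to the elementary identity
`K (u z) / (1 - z)² = K z + log (1 - z) / (1 - z)`.
-/

open Set Real

lemma hasDerivAt_log_one_sub {x : ℝ} (hx : x ≠ 1) :
    HasDerivAt (fun t => log (1 - t)) (-(1 - x)⁻¹) x := by
  simpa [div_eq_inv_mul] using ((hasDerivAt_id' x).const_sub 1).log (sub_ne_zero.2 hx.symm)

def dilogKernel : ℝ → ℝ := dslope (fun t => log (1 - t)) 0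

lemma dilogKernel_zero : dilogKernel 0 = -1 := by
  simp [dilogKernel, dslope_same, (hasDerivAt_log_one_sub zero_ne_one).deriv]

lemma dilogKernel_of_ne_zero {t : ℝ} (ht : t ≠ 0) : dilogKernel t = log (1 - t) / t := by
  simp [dilogKernel, dslope_of_ne _ ht, slope_def_field]

lemma continuousOn_dilogKernel : ContinuousOn dilogKernel (Iio 1) := by
  refine (continuousOn_dslope (Iio_mem_nhds zero_lt_one)).2 ⟨?_, ?_⟩
  · exact fun x hx => (hasDerivAt_log_one_sub (ne_of_lt hx)).continuousAt.continuousWithinAt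
  · exact (hasDerivAt_log_one_sub zero_ne_one).differentiableAt

lemma Li2_eq_neg_integral_dilogKernel (x : ℝ) : Li2 x = -∫ t in (0:ℝ)..x, dilogKernel t := by
  refine congrArg Neg.neg (intervalIntegral.integral_congr_ae ?_)
  filter_upwards [MeasureTheory.measure_eq_zero_iff_ae_notMem.1 (MeasureTheory.measure_singleton 0)]
    with t ht _
  exact (dilogKernel_of_ne_zero ht).symm

lemma hasDerivAt_Li2 {x : ℝ} (hx : x < 1) : HasDerivAt Li2 (-dilogKernel x) x := by
  rw [funext Li2_eq_neg_integral_dilogKernel]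
  refine (intervalIntegral.integral_hasDerivAt_right ?_ ?_ ?_).neg
  · refine (continuousOn_dilogKernel.mono fun t ht => ?_).intervalIntegrable
    exact ht.2.trans_lt (max_lt one_pos hx)
  · exact continuousOn_dilogKernel.stronglyMeasurableAtFilter isOpen_Iio x hx
  · exact continuousOn_dilogKernel.continuousAt (Iio_mem_nhds hx)

lemma dilogKernel_neg_div_one_sub {x : ℝ} (hx : x ≠ 1) :
    dilogKernel (-x / (1 - x)) / (1 - x) ^ 2 = dilogKernel x + log (1 - x) / (1 - x) := by
  have hx' : 1 - x ≠ 0 := sub_ne_zero.2 hx.symm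
  rcases eq_or_ne x 0 with rfl | hx0
  · simp [dilogKernel_zero]
  · have hu : -x / (1 - x) ≠ 0 := div_ne_zero (neg_ne_zero.2 hx0) hx'
    have h1u : 1 - -x / (1 - x) = (1 - x)⁻¹ := by field_simp; ring
    rw [dilogKernel_of_ne_zero hu, dilogKernel_of_ne_zero hx0, h1u, log_inv]
    field_simp
    ring

lemma hasDerivAt_landen {x : ℝ} (hx : x < 1) :
    HasDerivAt (fun z => Li2 (-z / (1 - z)) + Li2 z + 1 / 2 * log (1 - z) ^ 2) 0 x := by
  have hx' : 0 < 1 - x := by linarith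
  have hu : HasDerivAt (fun z => -z / (1 - z)) (-((1 - x) ^ 2)⁻¹) x := by
    refine ((hasDerivAt_neg' x).div ((hasDerivAt_id' x).const_sub 1) hx'.ne').congr_deriv ?_
    field_simp
    ring
  have hux : -x / (1 - x) < 1 := (div_lt_one hx').2 (by linarith)
  refine ((((hasDerivAt_Li2 hux).comp x hu).add (hasDerivAt_Li2 hx)).add
    (((hasDerivAt_log_one_sub hx.ne).pow 2).const_mul (1 / 2))).congr_deriv ?_
  rw [(div_eq_iff (pow_ne_zero 2 hx'.ne')).1 (dilogKernel_neg_div_one_sub hx.ne)]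
  field_simp
  ring

theorem landen_formula_general (z : ℝ) (h1 : z < 1) :
    Li2 (-z / (1 - z)) = -Li2 z - (1 / 2) * (Real.log (1 - z)) ^ 2 := by
  have hconst := isOpen_Iio.is_const_of_deriv_eq_zero isPreconnected_Iio
    (fun x hx => (hasDerivAt_landen hx).differentiableAt.differentiableWithinAt)
    (fun x hx => (hasDerivAt_landen hx).deriv) (mem_Iio.2 h1) (mem_Iio.2 one_pos)
  have hLi2_zero : Li2 0 = 0 := by simp [Li2]
  simp only [neg_zero, zero_div, sub_zero, log_one, hLi2_zero] at hconst
  linarith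

/-- Landen's formula — for real 0 < z < 1,
Li_2(−z/(1−z)) = −Li_2(z) − (1/2)·log²(1−z). -/
theorem landen_formula (z : ℝ) (h0 : 0 < z) (h1 : z < 1) :
    Li2 (-z / (1 - z)) = -Li2 z - (1 / 2) * (Real.log (1 - z)) ^ 2 :=
  landen_formula_general z h1
end
end
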